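/- arXiv:math/9804077 — 3 statements merged into one kernel-verified Lean document; each statement's English description precedes it below -/
import Mathlib

section
/- For all complex numbers x, z1, z2: sin(z2 - z1)·[sin(x+z1+z2)·sin(x-z1)·sin(x-z2) - sin(x-z1-z2)·sin(x+z1)·sin(x+z2)] = sin(z1 + z2)·[sin(x+z1-z2)·sin(x-z1)·sin(x+z2) - sin(x-z1+z2)·sin(x+z1)·sin(x-z2)]. -/
set_option maxHeartbeats 2000000 in
open Complex in
theorem stmt_1 (x z1 z2 : ℂ) :
    sin (z2 - z1) * (sin (x + z1 + z2) * sin (x - z1) * sin (x - z2)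
      - sin (x - z1 - z2) * sin (x + z1) * sin (x + z2))
    = sin (z1 + z2) * (sin (x + z1 - z2) * sin (x - z1) * sin (x + z2)
      - sin (x - z1 + z2) * sin (x + z1) * sin (x - z2)) := by
  simp only [Complex.sin, add_mul, sub_mul, neg_mul, neg_add, neg_sub, Complex.exp_add,
    Complex.exp_sub, Complex.exp_neg]
  field_simp
  ring
end

section
/- The polynomial τ(t1, t3) = t1^3 - a·t3 satisfies the differential Fay identity specialized to polynomial shifts, i.e. the Fay identity (z0-z1)(z2-z3)·τ(t+[z0]+[z1])·τ(t+[z2]+[z3]) + (z0-z2)(z3-z1)·τ(t+[z0]+[z2])·τ(t+[z3]+[z1]) + (z0-z3)(z1-z2)·τ(t+[z0]+[z3])·τ(t+[z1]+[z2]) = 0 for all z0, z1, z2, z3, t1, t3 ∈ ℂ, if and only if a = 3 (given a ∈ ℂ, a ≠ 0, and it is understood τ with a=3 is the genuine KdV tau function; at minimum prove: for a = 3 the identity holds identically, and for a ≠ 3 it fails for some choice of arguments). -/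
theorem stmt_9 (a : ℂ) (ha : a ≠ 0) :
    (∀ z0 z1 z2 z3 t1 t3 : ℂ,
      (z0 - z1) * (z2 - z3)
          * ((t1 + z0 + z1) ^ 3 - a * (t3 + z0 ^ 3 / 3 + z1 ^ 3 / 3))
          * ((t1 + z2 + z3) ^ 3 - a * (t3 + z2 ^ 3 / 3 + z3 ^ 3 / 3))
      + (z0 - z2) * (z3 - z1)
          * ((t1 + z0 + z2) ^ 3 - a * (t3 + z0 ^ 3 / 3 + z2 ^ 3 / 3))
          * ((t1 + z3 + z1) ^ 3 - a * (t3 + z3 ^ 3 / 3 + z1 ^ 3 / 3))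
      + (z0 - z3) * (z1 - z2)
          * ((t1 + z0 + z3) ^ 3 - a * (t3 + z0 ^ 3 / 3 + z3 ^ 3 / 3))
          * ((t1 + z1 + z2) ^ 3 - a * (t3 + z1 ^ 3 / 3 + z2 ^ 3 / 3)) = 0)
    ↔ a = 3 := by
  constructor
  · intro h
    have h1 := h 1 (-1) 0 2 0 0
    have h2 := h 1 (-1) 0 2 1 0
    -- h1 : (4/3)a^2 + 4a - 24 = 0 ; h2 : (4/3)a^2 - 32a + 84 = 0
    have h3 : (36 : ℂ) * a - 108 = 0 := by linear_combination h1 - h2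
    have : (36 : ℂ) * (a - 3) = 0 := by linear_combination h3
    rcases mul_eq_zero.mp this with h' | h'
    · norm_num at h'
    · exact sub_eq_zero.mp h'
  · rintro rfl
    intro z0 z1 z2 z3 t1 t3
    ring
end

section
/- For all complex t, z0, z1, z2, z3: sin(z0-z1)·sin(z2-z3)·sin(t+z0+z1)·sin(t+z2+z3) + sin(z0-z2)·sin(z3-z1)·sin(t+z0+z2)·sin(t+z3+z1) + sin(z0-z3)·sin(z1-z2)·sin(t+z0+z3)·sin(t+z1+z2) = 0. -/
set_option maxHeartbeats 4000000 in
open Complex in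
theorem stmt_11 (t z0 z1 z2 z3 : ℂ) :
    sin (z0 - z1) * sin (z2 - z3) * sin (t + z0 + z1) * sin (t + z2 + z3)
      + sin (z0 - z2) * sin (z3 - z1) * sin (t + z0 + z2) * sin (t + z3 + z1)
      + sin (z0 - z3) * sin (z1 - z2) * sin (t + z0 + z3) * sin (t + z1 + z2) = 0 := by
  have e : ∀ x : ℂ, sin x = (exp (x * I) - (exp (x * I))⁻¹) / (2 * I) := by
    intro x
    rw [Complex.sin, neg_mul, Complex.exp_neg]
    have hx : exp (x * I) ≠ 0 := Complex.exp_ne_zero _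
    field_simp
    ring_nf
    rw [Complex.I_sq]
    ring
  simp only [e, sub_mul, add_mul, Complex.exp_add, Complex.exp_sub]
  generalize ht : exp (t * I) = a
  generalize h0 : exp (z0 * I) = b0
  generalize h1 : exp (z1 * I) = b1
  generalize h2 : exp (z2 * I) = b2
  generalize h3 : exp (z3 * I) = b3
  have ha : a ≠ 0 := ht ▸ Complex.exp_ne_zero _
  have hb0 : b0 ≠ 0 := h0 ▸ Complex.exp_ne_zero _
  have hb1 : b1 ≠ 0 := h1 ▸ Complex.exp_ne_zero _
  have hb2 : b2 ≠ 0 := h2 ▸ Complex.exp_ne_zero _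
  have hb3 : b3 ≠ 0 := h3 ▸ Complex.exp_ne_zero _
  field_simp
  ring
end
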